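/- arXiv:2301.08818 — 2 statements merged into one kernel-verified Lean document; each statement's English description precedes it below -/
import Mathlib

section
/- Let A be an n×n complex matrix of index k and let m ≥ 1 be an integer. Then A (A^{#_m})^2 = A^{#_m}. -/
open Matrix

/-- `X` is the Moore–Penrose inverse of `A` (four Penrose equations). -/
def MoorePenroseOf {n : ℕ} (A X : Matrix (Fin n) (Fin n) ℂ) : Prop :=
  A * X * A = A ∧ X * A * X = X ∧ (A * X)ᴴ = A * X ∧ (X * A)ᴴ = X * A

/-- Column space of a square complex matrix. -/
noncomputable def colSpace {n : ℕ} (A : Matrix (Fin n) (Fin n) ℂ) : Submodule ℂ (Fin n → ℂ) :=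
  LinearMap.range A.mulVecLin

/-- Null space of a square complex matrix. -/
noncomputable def nullSpace {n : ℕ} (A : Matrix (Fin n) (Fin n) ℂ) : Submodule ℂ (Fin n → ℂ) :=
  LinearMap.ker A.mulVecLin

/-- `k` is the index of `A`: the smallest nonnegative integer with
`rank(A^k) = rank(A^(k+1))`. -/
def HasIndex {n : ℕ} (A : Matrix (Fin n) (Fin n) ℂ) (k : ℕ) : Prop :=
  (A ^ k).rank = (A ^ (k + 1)).rank ∧ ∀ j < k, (A ^ j).rank ≠ (A ^ (j + 1)).rank

/-- `X` is the core-EP inverse of `A` (where `k = Ind(A)`): `XAX = X` and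
`R(X) = R(Xᴴ) = R(A^k)`. -/
def IsCoreEP {n : ℕ} (A X : Matrix (Fin n) (Fin n) ℂ) (k : ℕ) : Prop :=
  X * A * X = X ∧ colSpace X = colSpace (A ^ k) ∧ colSpace Xᴴ = colSpace (A ^ k)

/-!
Write `X` for the core-EP inverse and `P = AᵐAᵐ†`. Since `A^k = X B'` and `XAX = X`, one gets
`X A^(k+1) = A^k`; together with `R(A^(k+1)) = R(A^k)` this makes `AX` the identity on
`R(X) = R(A^k)`, i.e. `AX² = X`, and it gives `XᵐAᵐX = X`. As `R(X) ⊆ R(Aᵐ)`, also `PX = X`.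
With `W = X^(m+1)Aᵐ` these three identities yield `PW = W` and `W² = X^(m+2)Aᵐ`, hence
`A(WP)² = AX^(m+2)AᵐP = X^(m+1)AᵐP = WP`.
-/

section Monoid

variable {M : Type*} [Monoid M] {A X : M} {k : ℕ}

theorem mul_pow_succ_eq_pow_of_mul_mul_eq {B : M} (hXAX : X * A * X = X) (hB : A ^ k = X * B) :
    X * A ^ (k + 1) = A ^ k := by
  rw [pow_succ', hB, ← mul_assoc, ← mul_assoc, hXAX]

theorem mul_mul_self_eq_of_mul_pow_succ_eq {B C : M} (hXA : X * A ^ (k + 1) = A ^ k)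
    (hC : A ^ k = A ^ (k + 1) * C) (hB : X = A ^ k * B) : A * X * X = X := by
  have hAXA : A * X * A ^ k = A ^ k := by
    calc A * X * A ^ k = A * (X * A ^ (k + 1)) * C := by rw [hC]; simp only [mul_assoc]
      _ = A ^ k := by rw [hXA, ← pow_succ', ← hC]
  calc A * X * X = A * X * A ^ k * B := by rw [mul_assoc _ (A ^ k), ← hB]
    _ = X := by rw [hAXA, hB]

theorem pow_mul_pow_mul_eq_of_mul_pow_succ_eq {B : M} (hXA : X * A ^ (k + 1) = A ^ k)
    (hB : X = A ^ k * B) (m : ℕ) : X ^ m * A ^ m * X = X := by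
  have hpow : ∀ j, X ^ j * A ^ (k + j) = A ^ k := by
    intro j
    induction j with
    | zero => simp
    | succ j ih =>
      calc X ^ (j + 1) * A ^ (k + (j + 1)) = X ^ j * (X * A ^ (k + 1)) * A ^ j := by
            rw [pow_succ, ← add_assoc, add_right_comm, pow_add A (k + 1)]
            simp only [mul_assoc]
        _ = A ^ k := by rw [hXA, mul_assoc, ← pow_add, ih]
  calc X ^ m * A ^ m * X = X ^ m * A ^ (k + m) * B := by
        rw [hB, add_comm, pow_add]; simp only [mul_assoc]
    _ = X := by rw [hpow, hB]

theorem mul_sq_pow_succ_mul_pow_mul_eq {P : M} (m : ℕ) (hAXX : A * X * X = X)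
    (hXAX : X ^ m * A ^ m * X = X) (hPX : P * X = X) :
    A * (X ^ (m + 1) * A ^ m * P) ^ 2 = X ^ (m + 1) * A ^ m * P := by
  have hPW : P * (X ^ (m + 1) * A ^ m) = X ^ (m + 1) * A ^ m := by
    rw [pow_succ', ← mul_assoc, ← mul_assoc, hPX, mul_assoc]
  have hWW : X ^ (m + 1) * A ^ m * (X ^ (m + 1) * A ^ m) = X * X * (X ^ m * A ^ m) := by
    calc _ = X * (X ^ m * A ^ m * X) * (X ^ m * A ^ m) := by
          rw [pow_succ' X m]; simp only [mul_assoc]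
      _ = X * X * (X ^ m * A ^ m) := by rw [hXAX]
  calc A * (X ^ (m + 1) * A ^ m * P) ^ 2
      = A * (X ^ (m + 1) * A ^ m * (P * (X ^ (m + 1) * A ^ m))) * P := by
        rw [sq]; simp only [mul_assoc]
    _ = A * X * X * (X ^ m * A ^ m) * P := by rw [hPW, hWW]; simp only [mul_assoc]
    _ = X ^ (m + 1) * A ^ m * P := by rw [hAXX, pow_succ']; simp only [mul_assoc]

end Monoid

section ColSpace

variable {n : ℕ}

theorem colSpace_mul (B C : Matrix (Fin n) (Fin n) ℂ) :
    colSpace (B * C) = (colSpace C).map B.mulVecLin := by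
  rw [colSpace, colSpace, Matrix.mulVecLin_mul, LinearMap.range_comp]

theorem colSpace_mul_le (B C : Matrix (Fin n) (Fin n) ℂ) : colSpace (B * C) ≤ colSpace B := by
  rw [colSpace, colSpace, Matrix.mulVecLin_mul]
  exact LinearMap.range_comp_le_range _ _

theorem exists_eq_mul_of_colSpace_le {B C : Matrix (Fin n) (Fin n) ℂ}
    (h : colSpace B ≤ colSpace C) : ∃ D, B = C * D := by
  obtain ⟨g, hg⟩ := Module.projective_lifting_property C.mulVecLin.rangeRestrict
    (B.mulVecLin.codRestrict _ fun v => h ⟨v, rfl⟩) C.mulVecLin.surjective_rangeRestrict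
  refine ⟨LinearMap.toMatrix' g, Matrix.toLin'.injective (LinearMap.ext fun v => ?_)⟩
  rw [Matrix.toLin'_mul, Matrix.toLin'_toMatrix']
  exact (congrArg Subtype.val (LinearMap.congr_fun hg v)).symm

theorem colSpace_pow_succ_eq_of_rank_eq {A : Matrix (Fin n) (Fin n) ℂ} {k : ℕ}
    (h : (A ^ k).rank = (A ^ (k + 1)).rank) : colSpace (A ^ (k + 1)) = colSpace (A ^ k) :=
  Submodule.eq_of_le_of_finrank_eq (pow_succ A k ▸ colSpace_mul_le _ _) h.symm

theorem colSpace_pow_le_of_colSpace_pow_succ_eq {A : Matrix (Fin n) (Fin n) ℂ} {k : ℕ}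
    (h : colSpace (A ^ (k + 1)) = colSpace (A ^ k)) (m : ℕ) :
    colSpace (A ^ k) ≤ colSpace (A ^ m) := by
  rcases le_total m k with hmk | hkm
  · rw [← Nat.add_sub_cancel' hmk, pow_add]
    exact colSpace_mul_le _ _
  · obtain ⟨j, rfl⟩ := Nat.exists_eq_add_of_le hkm
    clear hkm
    suffices colSpace (A ^ (k + j)) = colSpace (A ^ k) from this.ge
    induction j with
    | zero => rfl
    | succ j ih => rw [← add_assoc, pow_succ', colSpace_mul, ih, ← colSpace_mul, ← pow_succ', h]

end ColSpace

theorem MoorePenroseOf.mul_mul_eq_of_colSpace_le {n : ℕ} {B Bd Y : Matrix (Fin n) (Fin n) ℂ}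
    (hMP : MoorePenroseOf B Bd) (h : colSpace Y ≤ colSpace B) : B * Bd * Y = Y := by
  obtain ⟨D, rfl⟩ := exists_eq_mul_of_colSpace_le h
  rw [← mul_assoc, hMP.1]

theorem IsCoreEP.mul_pow_succ_eq_pow {n k : ℕ} {A X : Matrix (Fin n) (Fin n) ℂ}
    (hX : IsCoreEP A X k) : X * A ^ (k + 1) = A ^ k :=
  have ⟨_, hB⟩ := exists_eq_mul_of_colSpace_le hX.2.1.ge
  mul_pow_succ_eq_pow_of_mul_mul_eq hX.1 hB

theorem stmt_5_general {n k m : ℕ}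
    (A CEP AmDag : Matrix (Fin n) (Fin n) ℂ)
    (hInd : HasIndex A k)
    (hCEP : IsCoreEP A CEP k)
    (hMP : MoorePenroseOf (A ^ m) AmDag) :
    A * (CEP ^ (m + 1) * A ^ m * (A ^ m * AmDag)) ^ 2 =
      CEP ^ (m + 1) * A ^ m * (A ^ m * AmDag) := by
  have hstab := colSpace_pow_succ_eq_of_rank_eq hInd.1
  have hXA := hCEP.mul_pow_succ_eq_pow
  obtain ⟨B, hB⟩ := exists_eq_mul_of_colSpace_le hCEP.2.1.le
  obtain ⟨C, hC⟩ := exists_eq_mul_of_colSpace_le hstab.ge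
  have hPX : A ^ m * AmDag * CEP = CEP :=
    hMP.mul_mul_eq_of_colSpace_le (hCEP.2.1 ▸ colSpace_pow_le_of_colSpace_pow_succ_eq hstab m)
  exact mul_sq_pow_succ_mul_pow_mul_eq m (mul_mul_self_eq_of_mul_pow_succ_eq hXA hC hB)
    (pow_mul_pow_mul_eq_of_mul_pow_succ_eq hXA hB m) hPX

/-- `A (A^{#_m})^2 = A^{#_m}`. -/
theorem stmt_5 {n k m : ℕ} (hm : 1 ≤ m)
    (A CEP AmDag : Matrix (Fin n) (Fin n) ℂ)
    (hInd : HasIndex A k)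
    (hCEP : IsCoreEP A CEP k)
    (hMP : MoorePenroseOf (A ^ m) AmDag) :
    A * (CEP ^ (m + 1) * A ^ m * (A ^ m * AmDag)) ^ 2 =
      CEP ^ (m + 1) * A ^ m * (A ^ m * AmDag) :=
  stmt_5_general A CEP AmDag hInd hCEP hMP
end

section
/- Let A be an n×n complex matrix of index k, let m ≥ 1 be an integer, and let l be an integer with l ≥ k. Then A^{#_m} = (A^d)^{m+1} P_{A^l} A^m P_{A^m}, where A^d is the Drazin inverse of A. -/
/-!
Write `C = A⊕` and `P = P_{A^l}`. The range conditions on `C` give factorizations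
`C = A^k U`, `A^k = C W` and `Cᴴ = A^k V`; from these, `D A C = C` and `A C C = C`, so
`C^{j+1} = D^{j+1} A C` for every `j`. Moreover `A C = P`: `C P = C` because `P` is a Hermitian
projector fixing `A^k = A^l D^{l-k}`, and `A C A^l = A^l`. Hence already
`C^{m+1} = D^{m+1} P`. Apart from the factorizations, everything is an identity in a monoid
with involution.
-/

open Matrix

theorem exists_mul_eq_of_colSpace_le {n : ℕ} {X Y : Matrix (Fin n) (Fin n) ℂ}
    (h : colSpace X ≤ colSpace Y) : ∃ U, Y * U = X := by
  obtain ⟨g, hg⟩ := Module.projective_lifting_property Y.mulVecLin.rangeRestrict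
    (X.mulVecLin.codRestrict _ fun v => h ⟨v, rfl⟩) Y.mulVecLin.surjective_rangeRestrict
  refine ⟨LinearMap.toMatrix' g, Matrix.toLin'.injective ?_⟩
  rw [Matrix.toLin'_mul, Matrix.toLin'_toMatrix']
  exact LinearMap.ext fun v => congrArg Subtype.val (LinearMap.congr_fun hg v)

section Monoid

variable {M : Type*} [Monoid M] {A C D U W : M} {k l : ℕ}

theorem pow_succ_mul_eq_pow_of_drazin (hAD : Commute A D) (hD : D * A ^ (k + 1) = A ^ k)
    (hkl : k ≤ l) : A ^ (l + 1) * D = A ^ l := by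
  obtain ⟨j, rfl⟩ := Nat.exists_eq_add_of_le hkl
  rw [show k + j + 1 = j + (k + 1) by omega, pow_add, mul_assoc, (hAD.pow_left _).eq, hD,
    ← pow_add, add_comm]

theorem pow_mul_pow_sub_eq_pow_of_drazin (hAD : Commute A D) (hD : D * A ^ (k + 1) = A ^ k)
    (hkl : k ≤ l) : A ^ l * D ^ (l - k) = A ^ k := by
  obtain ⟨j, rfl⟩ := Nat.exists_eq_add_of_le hkl
  rw [Nat.add_sub_cancel_left]
  clear hkl
  induction j with
  | zero => simp
  | succ j ih =>
    rw [pow_succ' D, ← mul_assoc, ← add_assoc,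
      pow_succ_mul_eq_pow_of_drazin hAD hD (Nat.le_add_right k j), ih]

namespace CoreEP

theorem mul_pow_succ_eq_pow (hCAC : C * A * C = C) (hW : C * W = A ^ k) (hkl : k ≤ l) :
    C * A ^ (l + 1) = A ^ l := by
  obtain ⟨j, rfl⟩ := Nat.exists_eq_add_of_le hkl
  calc C * A ^ (k + j + 1) = C * A * C * W * A ^ j := by
        rw [add_right_comm, pow_add, pow_succ', ← hW]; simp only [mul_assoc]
    _ = A ^ (k + j) := by rw [hCAC, hW, pow_add]

theorem drazin_mul_mul_eq (hD : D * A ^ (k + 1) = A ^ k) (hU : A ^ k * U = C) :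
    D * (A * C) = C := by
  rw [← hU, ← mul_assoc A, ← pow_succ', ← mul_assoc, hD]

theorem mul_mul_self_eq (hAD : Commute A D) (hD : D * A ^ (k + 1) = A ^ k)
    (hCAC : C * A * C = C) (hU : A ^ k * U = C) (hW : C * W = A ^ k) : A * C * C = C := by
  have hC : C = A ^ (k + 1) * (D * U) := by
    rw [← mul_assoc, pow_succ_mul_eq_pow_of_drazin hAD hD le_rfl, hU]
  calc A * C * C = A * (C * A ^ (k + 1)) * (D * U) := by nth_rw 2 [hC]; simp only [mul_assoc]
    _ = C := by rw [mul_pow_succ_eq_pow hCAC hW le_rfl, ← pow_succ', ← hC]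

theorem pow_succ_eq_drazin_pow_mul (hDAC : D * (A * C) = C) (hACC : A * C * C = C) (j : ℕ) :
    C ^ (j + 1) = D ^ (j + 1) * (A * C) := by
  induction j with
  | zero => simpa using hDAC.symm
  | succ j ih =>
    calc C ^ (j + 1 + 1) = D ^ (j + 1) * (A * C * C) := by rw [pow_succ, ih]; simp only [mul_assoc]
      _ = D ^ (j + 1 + 1) * (A * C) := by rw [hACC, pow_succ D (j + 1), mul_assoc, hDAC]

theorem mul_mul_pow_eq_pow (hAD : Commute A D) (hD : D * A ^ (k + 1) = A ^ k)
    (hCAC : C * A * C = C) (hW : C * W = A ^ k) (hkl : k ≤ l) : A * C * A ^ l = A ^ l := by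
  have hAl := pow_succ_mul_eq_pow_of_drazin hAD hD hkl
  calc A * C * A ^ l = A * (C * A ^ (l + 1)) * D := by rw [← hAl]; simp only [mul_assoc]
    _ = A ^ l := by rw [mul_pow_succ_eq_pow hCAC hW hkl, ← pow_succ', hAl]

variable [StarMul M] {V X : M}

theorem mul_eq_pow_mul (hAD : Commute A D) (hD : D * A ^ (k + 1) = A ^ k)
    (hCAC : C * A * C = C) (hW : C * W = A ^ k) (hV : A ^ k * V = star C)
    (hX : A ^ l * X * A ^ l = A ^ l) (hXs : star (A ^ l * X) = A ^ l * X) (hkl : k ≤ l) :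
    A * C = A ^ l * X := by
  have hPA : A ^ l * X * A ^ k = A ^ k := by
    rw [← pow_mul_pow_sub_eq_pow_of_drazin hAD hD hkl, ← mul_assoc, hX]
  have hCP : C * (A ^ l * X) = C := star_injective <| by
    rw [star_mul, hXs, ← hV, ← mul_assoc, hPA]
  calc A * C = A * C * A ^ l * X := by rw [mul_assoc _ (A ^ l), mul_assoc A, hCP]
    _ = A ^ l * X := by rw [mul_mul_pow_eq_pow hAD hD hCAC hW hkl]

end CoreEP

end Monoid

theorem stmt_7_general {n k m l : ℕ} (hl : k ≤ l)
    (A CEP AmDag AlDag D : Matrix (Fin n) (Fin n) ℂ)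
    (hCEP : IsCoreEP A CEP k)
    (hMPl : MoorePenroseOf (A ^ l) AlDag)
    (hD2 : A * D = D * A)
    (hD3 : D * A ^ (k + 1) = A ^ k) :
    CEP ^ (m + 1) * A ^ m * (A ^ m * AmDag) =
      D ^ (m + 1) * (A ^ l * AlDag) * A ^ m * (A ^ m * AmDag) := by
  obtain ⟨hCAC, hC, hCH⟩ := hCEP
  obtain ⟨U, hU⟩ := exists_mul_eq_of_colSpace_le hC.le
  obtain ⟨W, hW⟩ := exists_mul_eq_of_colSpace_le hC.ge
  obtain ⟨V, hV⟩ := exists_mul_eq_of_colSpace_le hCH.le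
  have hAD : Commute A D := hD2
  rw [CoreEP.pow_succ_eq_drazin_pow_mul (CoreEP.drazin_mul_mul_eq hD3 hU)
      (CoreEP.mul_mul_self_eq hAD hD3 hCAC hU hW),
    CoreEP.mul_eq_pow_mul hAD hD3 hCAC hW hV hMPl.1 hMPl.2.2.1 hl]

/-- for `l ≥ k`, `A^{#_m} = (A^d)^{m+1} P_{A^l} A^m P_{A^m}`. -/
theorem stmt_7 {n k m l : ℕ} (hm : 1 ≤ m) (hl : k ≤ l)
    (A CEP AmDag AlDag D : Matrix (Fin n) (Fin n) ℂ)
    (hInd : HasIndex A k)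
    (hCEP : IsCoreEP A CEP k)
    (hMPm : MoorePenroseOf (A ^ m) AmDag)
    (hMPl : MoorePenroseOf (A ^ l) AlDag)
    (hD1 : D * A * D = D)
    (hD2 : A * D = D * A)
    (hD3 : D * A ^ (k + 1) = A ^ k) :
    CEP ^ (m + 1) * A ^ m * (A ^ m * AmDag) =
      D ^ (m + 1) * (A ^ l * AlDag) * A ^ m * (A ^ m * AmDag) :=
  stmt_7_general hl A CEP AmDag AlDag D hCEP hMPl hD2 hD3
end
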